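/- arXiv:2108.03209 — 4 statements merged into one kernel-verified Lean document; each statement's English description precedes it below -/
import Mathlib

section
/- Let N ≥ 2 be an integer and x* > 0, y* > 0 real numbers satisfying (x*)²/N ≤ y* ≤ (x*)². Define p = (x*/N)·[1 − √(1 − (1 − y*/(x*)²)·(N/(N−1)))] and q = x* − (N−1)p. Then p ≥ 0, q ≥ 0, and the dose vector (q, p, p, …, p) ∈ ℝ^N (with N−1 copies of p) satisfies q + (N−1)p = x* and q² + (N−1)p² = y*. -/
/-!
Writing `p = (x/N)(1 - s)` gives `q = (x/N)(1 + (N-1)s)`, so both are nonnegative exactly when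
`0 ≤ s ≤ 1`, and `q² + (N-1)p² = (x²/N)(1 + (N-1)s²)`. The formula takes `s` to be the square root
of `(N y - x²) / (x² (N-1))`, which lies in `[0, 1]` precisely because `x²/N ≤ y ≤ x²`,
and with this `s²` the sum of squares is `y`.
-/

namespace DoseRecovery

variable {n x y s : ℝ}

lemma radicand_eq (hn : n ≠ 1) (hx : x ≠ 0) :
    1 - (1 - y / x ^ 2) * (n / (n - 1)) = (n * y - x ^ 2) / (x ^ 2 * (n - 1)) := by
  have : n - 1 ≠ 0 := sub_ne_zero.mpr hn
  field_simp
  ring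

lemma radicand_mem_Icc (hn : 1 < n) (hx : x ≠ 0) (h1 : x ^ 2 / n ≤ y) (h2 : y ≤ x ^ 2) :
    1 - (1 - y / x ^ 2) * (n / (n - 1)) ∈ Set.Icc 0 1 := by
  have hx2 : 0 < x ^ 2 := by positivity
  constructor
  · have : x ^ 2 ≤ n * y := by rwa [div_le_iff₀ (by linarith), mul_comm] at h1
    rw [radicand_eq hn.ne' hx]
    apply div_nonneg <;> nlinarith
  · have : 0 ≤ 1 - y / x ^ 2 := sub_nonneg.mpr ((div_le_one hx2).mpr h2)
    have : 0 ≤ n / (n - 1) := div_nonneg (by linarith) (by linarith)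
    nlinarith

lemma sub_mul_equal_dose (hn : n ≠ 0) :
    x - (n - 1) * (x / n * (1 - s)) = x / n * (1 + (n - 1) * s) := by
  field_simp
  ring

lemma sq_add_mul_sq_equal_dose (hn : n ≠ 0) :
    (x / n * (1 + (n - 1) * s)) ^ 2 + (n - 1) * (x / n * (1 - s)) ^ 2
      = x ^ 2 / n * (1 + (n - 1) * s ^ 2) := by
  field_simp
  ring

theorem schedule_of_sq_eq_radicand (hn : 1 < n) (hx : 0 < x) (hs0 : 0 ≤ s) (hs1 : s ≤ 1)
    (hs : s ^ 2 = 1 - (1 - y / x ^ 2) * (n / (n - 1))) :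
    let p := x / n * (1 - s)
    let q := x - (n - 1) * p
    0 ≤ p ∧ 0 ≤ q ∧ q + (n - 1) * p = x ∧ q ^ 2 + (n - 1) * p ^ 2 = y := by
  intro p q
  have hn0 : n ≠ 0 := by positivity
  have hq : q = x / n * (1 + (n - 1) * s) := sub_mul_equal_dose hn0
  refine ⟨?_, ?_, sub_add_cancel _ _, ?_⟩
  · have : 0 ≤ 1 - s := sub_nonneg.mpr hs1
    positivity
  · rw [hq]
    have : 0 ≤ (n - 1) * s := mul_nonneg (by linarith) hs0
    positivity
  · rw [hq, sq_add_mul_sq_equal_dose hn0, hs, radicand_eq hn.ne' hx.ne']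
    have : n - 1 ≠ 0 := by linarith
    field_simp
    ring

end DoseRecovery

theorem dose_recovery_general
    (N : ℕ) (hN : 2 ≤ N) (x y : ℝ) (hx : 0 < x)
    (h1 : x ^ 2 / (N : ℝ) ≤ y) (h2 : y ≤ x ^ 2) :
    let p : ℝ := (x / N) * (1 - Real.sqrt (1 - (1 - y / x ^ 2) * ((N : ℝ) / ((N : ℝ) - 1))))
    let q : ℝ := x - ((N : ℝ) - 1) * p
    0 ≤ p ∧ 0 ≤ q ∧ q + ((N : ℝ) - 1) * p = x ∧ q ^ 2 + ((N : ℝ) - 1) * p ^ 2 = y := by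
  have hN1 : (1 : ℝ) < N := by exact_mod_cast hN
  obtain ⟨hr0, hr1⟩ := DoseRecovery.radicand_mem_Icc hN1 hx.ne' h1 h2
  exact DoseRecovery.schedule_of_sq_eq_radicand hN1 hx (Real.sqrt_nonneg _)
    (Real.sqrt_le_one.mpr hr1) (Real.sq_sqrt hr0)

/-- Dose-recovery formula: from (x*, y*) with (x*)²/N ≤ y* ≤ (x*)², the schedule
(q, p, ..., p) is nonnegative and reproduces the total dose and sum of squares. -/
theorem dose_recovery
    (N : ℕ) (hN : 2 ≤ N) (x y : ℝ) (hx : 0 < x) (hy : 0 < y)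
    (h1 : x ^ 2 / (N : ℝ) ≤ y) (h2 : y ≤ x ^ 2) :
    let p : ℝ := (x / N) * (1 - Real.sqrt (1 - (1 - y / x ^ 2) * ((N : ℝ) / ((N : ℝ) - 1))))
    let q : ℝ := x - ((N : ℝ) - 1) * p
    0 ≤ p ∧ 0 ≤ q ∧ q + ((N : ℝ) - 1) * p = x ∧ q ^ 2 + ((N : ℝ) - 1) * p ^ 2 = y :=
  dose_recovery_general N hN x y hx h1 h2
end

section
/- Let x ≥ 0, y ≥ 0, ρ > 0, B > 0, and N ≥ 1, and let b(N) = (−1 + √(1 + 4ρB/N))/(2ρ). If x + ρy ≤ B and y ≥ x²/N, then x ≤ N·b(N). Equivalently, the total dose of any nonnegative N-fraction schedule whose BED for an organ with parameter ρ is at most B cannot exceed N·b(N). -/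
/-!
Combining the two constraints gives the quadratic inequality `(ρ/N) x² + x - B ≤ 0`, and `N·b(N)`
is exactly the larger root of this quadratic, so `x` cannot exceed it.
-/

theorem le_neg_add_sqrt_discrim_div_of_quadratic_nonpos {a b c t : ℝ} (ha : 0 < a)
    (h : a * t ^ 2 + b * t + c ≤ 0) : t ≤ (-b + √(discrim a b c)) / (2 * a) := by
  -- completing the square: `(2at + b)² = 4a(at² + bt + c) + discrim a b c`
  have hsq : (2 * a * t + b) ^ 2 ≤ discrim a b c := by
    rw [discrim]
    nlinarith
  rw [le_div_iff₀ (by positivity)]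
  linarith [(le_abs_self _).trans (Real.abs_le_sqrt hsq)]

theorem total_dose_le_N_b_general
    (x y ρ B : ℝ) (N : ℕ) (hN : 1 ≤ N)
    (hρ : 0 < ρ)
    (hBED : x + ρ * y ≤ B) (hCS : x ^ 2 / (N : ℝ) ≤ y) :
    x ≤ (N : ℝ) * ((-1 + Real.sqrt (1 + 4 * ρ * B / N)) / (2 * ρ)) := by
  have hN0 : (0 : ℝ) < N := by exact_mod_cast hN
  have hquad : ρ / N * x ^ 2 + 1 * x + -B ≤ 0 :=
    calc ρ / N * x ^ 2 + 1 * x + -B = x + ρ * (x ^ 2 / N) - B := by ring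
      _ ≤ 0 := by linarith [mul_le_mul_of_nonneg_left hCS hρ.le]
  calc x ≤ (-1 + √(discrim (ρ / N) 1 (-B))) / (2 * (ρ / N)) :=
        le_neg_add_sqrt_discrim_div_of_quadratic_nonpos (div_pos hρ hN0) hquad
    _ = N * ((-1 + √(1 + 4 * ρ * B / N)) / (2 * ρ)) := by
        rw [discrim]
        field_simp
        ring_nf

/-- The total dose of any nonnegative N-fraction schedule whose BED for an organ
with parameter ρ is at most B cannot exceed N·b(N). -/
theorem total_dose_le_N_b
    (x y ρ B : ℝ) (N : ℕ) (hN : 1 ≤ N)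
    (hx : 0 ≤ x) (hy : 0 ≤ y) (hρ : 0 < ρ) (hB : 0 < B)
    (hBED : x + ρ * y ≤ B) (hCS : x ^ 2 / (N : ℝ) ≤ y) :
    x ≤ (N : ℝ) * ((-1 + Real.sqrt (1 + 4 * ρ * B / N)) / (2 * ρ)) :=
  total_dose_le_N_b_general x y ρ B N hN hρ hBED hCS
end

section
/- Fix N ≥ 1 and suppose the thresholds D₁²/N₁ ≤ … ≤ D_n²/N_n are sorted. For 0 ≤ k ≤ n−1, if a dose vector d ≥ 0 is feasible to the k-th subproblem constraints with the boundary equality Σ d_t² = D_{k+1}²/N_{k+1} (replacing the strict inequality Σ d_t² < D_{k+1}²/N_{k+1} by equality), then d is feasible to the (k+1)-st subproblem, i.e., it satisfies Σ d_t + ρmax_m Σ d_t² ≤ D_m + ρmax_m D_m²/N_m for m ≤ k+1, Σ d_t + ρmin_m Σ d_t² ≤ D_m + ρmin_m D_m²/N_m for m ≥ k+2, Σ d_t² ≥ D_{k+1}²/N_{k+1}, and Σ d_t² ≤ D_{k+2}²/N_{k+2} (when k+2 ≤ n). -/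
/-- Organs are 0-indexed: organ `k` here is organ `k + 1` of the paper. -/
theorem boundary_equality_feasible_next_subproblem_general
    (n NF : ℕ) (ρmin ρmax D Nm : Fin n → ℝ)
    (hsorted : Monotone (fun m : Fin n => D m ^ 2 / Nm m))
    (k : ℕ) (hkn : k < n)
    (d : Fin NF → ℝ)
    (hmax : ∀ m : Fin n, (m : ℕ) < k →
      (∑ t, d t) + ρmax m * (∑ t, d t ^ 2) ≤ D m + ρmax m * (D m ^ 2 / Nm m))
    (hmin : ∀ m : Fin n, k ≤ (m : ℕ) →
      (∑ t, d t) + ρmin m * (∑ t, d t ^ 2) ≤ D m + ρmin m * (D m ^ 2 / Nm m))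
    (heq : (∑ t, d t ^ 2) = D ⟨k, hkn⟩ ^ 2 / Nm ⟨k, hkn⟩) :
    (∀ m : Fin n, (m : ℕ) < k + 1 →
      (∑ t, d t) + ρmax m * (∑ t, d t ^ 2) ≤ D m + ρmax m * (D m ^ 2 / Nm m)) ∧
    (∀ m : Fin n, k + 1 ≤ (m : ℕ) →
      (∑ t, d t) + ρmin m * (∑ t, d t ^ 2) ≤ D m + ρmin m * (D m ^ 2 / Nm m)) ∧
    (D ⟨k, hkn⟩ ^ 2 / Nm ⟨k, hkn⟩ ≤ (∑ t, d t ^ 2)) ∧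
    (∀ hk1 : k + 1 < n, (∑ t, d t ^ 2) ≤ D ⟨k + 1, hk1⟩ ^ 2 / Nm ⟨k + 1, hk1⟩) := by
  -- On the boundary the uncertain term ρ (Σ d_t² - D_k²/N_k) vanishes, so organ k's
  -- constraint says Σ d_t ≤ D_k whatever the value of ρ.
  have hdose : (∑ t, d t) ≤ D ⟨k, hkn⟩ := by
    have hk := hmin ⟨k, hkn⟩ le_rfl
    rwa [heq, add_le_add_iff_right] at hk
  refine ⟨fun m hm => ?_, fun m hm => hmin m (Nat.le_of_succ_le hm), heq.ge,
    fun hk1 => heq ▸ hsorted (Nat.le_succ k)⟩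
  rcases Nat.lt_succ_iff_lt_or_eq.mp hm with hlt | hk
  · exact hmax m hlt
  · obtain rfl : m = ⟨k, hkn⟩ := Fin.ext hk
    rw [heq]
    exact (add_le_add_iff_right _).2 hdose

/-- If a nonnegative dose vector is feasible for the k-th subproblem with the
upper boundary satisfied with equality Σ d_t² = D_{k+1}²/N_{k+1}, then it is
feasible for the (k+1)-st subproblem. (Organs are 0-indexed: the (k+1)-st
organ of the paper has index k here.) -/
theorem boundary_equality_feasible_next_subproblem
    (n NF : ℕ) (ρmin ρmax D Nm : Fin n → ℝ)
    (hρmin : ∀ m, 0 < ρmin m) (hρ : ∀ m, ρmin m ≤ ρmax m)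
    (hD : ∀ m, 0 < D m) (hNm : ∀ m, 0 < Nm m)
    (hsorted : Monotone (fun m : Fin n => D m ^ 2 / Nm m))
    (k : ℕ) (hkn : k < n)
    (d : Fin NF → ℝ) (hd : ∀ t, 0 ≤ d t)
    (hmax : ∀ m : Fin n, (m : ℕ) < k →
      (∑ t, d t) + ρmax m * (∑ t, d t ^ 2) ≤ D m + ρmax m * (D m ^ 2 / Nm m))
    (hmin : ∀ m : Fin n, k ≤ (m : ℕ) →
      (∑ t, d t) + ρmin m * (∑ t, d t ^ 2) ≤ D m + ρmin m * (D m ^ 2 / Nm m))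
    (hlow : ∀ hk0 : 0 < k, D ⟨k - 1, lt_trans (Nat.sub_lt hk0 one_pos) hkn⟩ ^ 2 /
      Nm ⟨k - 1, lt_trans (Nat.sub_lt hk0 one_pos) hkn⟩ ≤ (∑ t, d t ^ 2))
    (heq : (∑ t, d t ^ 2) = D ⟨k, hkn⟩ ^ 2 / Nm ⟨k, hkn⟩) :
    (∀ m : Fin n, (m : ℕ) < k + 1 →
      (∑ t, d t) + ρmax m * (∑ t, d t ^ 2) ≤ D m + ρmax m * (D m ^ 2 / Nm m)) ∧
    (∀ m : Fin n, k + 1 ≤ (m : ℕ) →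
      (∑ t, d t) + ρmin m * (∑ t, d t ^ 2) ≤ D m + ρmin m * (D m ^ 2 / Nm m)) ∧
    (D ⟨k, hkn⟩ ^ 2 / Nm ⟨k, hkn⟩ ≤ (∑ t, d t ^ 2)) ∧
    (∀ hk1 : k + 1 < n, (∑ t, d t ^ 2) ≤ D ⟨k + 1, hk1⟩ ^ 2 / Nm ⟨k + 1, hk1⟩) :=
  boundary_equality_feasible_next_subproblem_general n NF ρmin ρmax D Nm hsorted k hkn d hmax hmin
    heq
end

section
/- Let d ≥ 0 be a dose vector in ℝ^N feasible for all robust constraints: for every m ∈ {1,…,n} and every ρ̃_m ∈ [ρmin_m, ρmax_m], Σ d_t + ρ̃_m(Σ d_t² − D_m²/N_m) ≤ D_m. Then there exists k ∈ {0,1,…,n} such that d is feasible for the k-th subproblem with non-strict inequalities: Σ d_t + ρmax_m Σ d_t² ≤ D_m + ρmax_m D_m²/N_m for m ≤ k, Σ d_t + ρmin_m Σ d_t² ≤ D_m + ρmin_m D_m²/N_m for m > k, and D_k²/N_k ≤ Σ d_t² ≤ D_{k+1}²/N_{k+1} (with the convention D_0²/N_0 = 0 and D_{n+1}²/N_{n+1}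 = +∞). Conversely, any d feasible for some subproblem k is feasible for all robust constraints. -/
/-!
For fixed `d`, write `S = ∑ d_t²` and `T_m = D_m²/N_m`. The `m`-th robust constraint
`∑ d_t + ρ (S - T_m) ≤ D_m` is affine in `ρ`, so it holds on `[ρmin_m, ρmax_m]` iff it holds at
both endpoints; which endpoint binds depends only on the sign of `S - T_m`. Choosing `k` with
`T_{k-1} ≤ S ≤ T_k` (always possible), the thresholds being sorted puts the binding endpoint at
`ρmax_m` for `m < k` and at `ρmin_m` for `m ≥ k`: that is exactly the `k`-th subproblem.
-/

theorem add_mul_sub_le_iff {L ρ S T D : ℝ} : L + ρ * (S - T) ≤ D ↔ L + ρ * S ≤ D + ρ * T := by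
  constructor <;> intro h <;> linarith

theorem exists_index_bracketing {α : Type*} [LinearOrder α] {n : ℕ} (T : Fin n → α) (x : α) :
    ∃ k ≤ n, (∀ h : k - 1 < n, 0 < k → T ⟨k - 1, h⟩ ≤ x) ∧ (∀ h : k < n, x ≤ T ⟨k, h⟩) := by
  classical
  have hex : ∃ j, n ≤ j ∨ ∃ h : j < n, x ≤ T ⟨j, h⟩ := ⟨n, Or.inl le_rfl⟩
  refine ⟨Nat.find hex, Nat.find_min' hex (Or.inl le_rfl), fun h hpos => ?_, fun h => ?_⟩
  · have hnot := Nat.find_min hex (Nat.sub_lt hpos one_pos)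
    push Not at hnot
    exact (hnot.2 h).le
  · rcases Nat.find_spec hex with hn | ⟨_, hx⟩
    · omega
    · exact hx

section Bracketing

variable {α : Type*} [Preorder α] {n k : ℕ} {T : Fin n → α} {x : α}

theorem Monotone.apply_le_of_lt_of_apply_pred_le (hT : Monotone T) (hkn : k ≤ n)
    (hlo : ∀ h : k - 1 < n, 0 < k → T ⟨k - 1, h⟩ ≤ x) {m : Fin n} (hm : (m : ℕ) < k) :
    T m ≤ x := by
  have hk : k - 1 < n := by omega
  exact (hT (show m ≤ ⟨k - 1, hk⟩ from Fin.le_def.2 (Nat.le_sub_one_of_lt hm))).trans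
    (hlo hk (by omega))

theorem Monotone.le_apply_of_le_of_le_apply (hT : Monotone T)
    (hhi : ∀ h : k < n, x ≤ T ⟨k, h⟩) {m : Fin n} (hm : k ≤ (m : ℕ)) :
    x ≤ T m :=
  (hhi (by omega)).trans (hT (show (⟨k, by omega⟩ : Fin n) ≤ m from Fin.le_def.2 hm))

end Bracketing

theorem robust_feasible_iff_some_subproblem_general
    (n NF : ℕ) (ρmin ρmax D Nm : Fin n → ℝ)
    (hρ : ∀ m, ρmin m ≤ ρmax m)
    (hsorted : Monotone (fun m : Fin n => D m ^ 2 / Nm m))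
    (d : Fin NF → ℝ) :
    (∀ m : Fin n, ∀ ρ : ℝ, ρmin m ≤ ρ → ρ ≤ ρmax m →
        (∑ t, d t) + ρ * ((∑ t, d t ^ 2) - D m ^ 2 / Nm m) ≤ D m) ↔
    (∃ k : ℕ, k ≤ n ∧
      (∀ m : Fin n, (m : ℕ) < k →
        (∑ t, d t) + ρmax m * (∑ t, d t ^ 2) ≤ D m + ρmax m * (D m ^ 2 / Nm m)) ∧
      (∀ m : Fin n, k ≤ (m : ℕ) →
        (∑ t, d t) + ρmin m * (∑ t, d t ^ 2) ≤ D m + ρmin m * (D m ^ 2 / Nm m)) ∧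
      (∀ h : k - 1 < n, 0 < k →
        D ⟨k - 1, h⟩ ^ 2 / Nm ⟨k - 1, h⟩ ≤ (∑ t, d t ^ 2)) ∧
      (∀ h : k < n, (∑ t, d t ^ 2) ≤ D ⟨k, h⟩ ^ 2 / Nm ⟨k, h⟩)) := by
  constructor
  · intro hrob
    obtain ⟨k, hkn, hlo, hhi⟩ :=
      exists_index_bracketing (fun m : Fin n => D m ^ 2 / Nm m) (∑ t, d t ^ 2)
    exact ⟨k, hkn, fun m _ => add_mul_sub_le_iff.1 (hrob m _ (hρ m) le_rfl),
      fun m _ => add_mul_sub_le_iff.1 (hrob m _ le_rfl (hρ m)), hlo, hhi⟩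
  · rintro ⟨k, hkn, hmax, hmin, hlo, hhi⟩ m ρ hρmin_le hle_ρmax
    rcases lt_or_ge (m : ℕ) k with hm | hm
    · have hT := hsorted.apply_le_of_lt_of_apply_pred_le hkn hlo hm
      calc _ ≤ (∑ t, d t) + ρmax m * ((∑ t, d t ^ 2) - D m ^ 2 / Nm m) :=
            (add_le_add_iff_left _).2 (mul_le_mul_of_nonneg_right hle_ρmax (sub_nonneg.2 hT))
        _ ≤ D m := add_mul_sub_le_iff.2 (hmax m hm)
    · have hT := hsorted.le_apply_of_le_of_le_apply hhi hm
      calc _ ≤ (∑ t, d t) + ρmin m * ((∑ t, d t ^ 2) - D m ^ 2 / Nm m) :=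
            (add_le_add_iff_left _).2 (mul_le_mul_of_nonpos_right hρmin_le (sub_nonpos.2 hT))
        _ ≤ D m := add_mul_sub_le_iff.2 (hmin m hm)

/-- The feasible region of the robust fractionation constraints equals the union
of the n+1 subproblem feasible regions (with non-strict inequalities, and the
conventions D_0²/N_0 = 0, D_{n+1}²/N_{n+1} = +∞ encoded conditionally). -/
theorem robust_feasible_iff_some_subproblem
    (n NF : ℕ) (ρmin ρmax D Nm : Fin n → ℝ)
    (hρmin : ∀ m, 0 < ρmin m) (hρ : ∀ m, ρmin m ≤ ρmax m)
    (hD : ∀ m, 0 < D m) (hNm : ∀ m, 0 < Nm m)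
    (hsorted : Monotone (fun m : Fin n => D m ^ 2 / Nm m))
    (d : Fin NF → ℝ) (hd : ∀ t, 0 ≤ d t) :
    (∀ m : Fin n, ∀ ρ : ℝ, ρmin m ≤ ρ → ρ ≤ ρmax m →
        (∑ t, d t) + ρ * ((∑ t, d t ^ 2) - D m ^ 2 / Nm m) ≤ D m) ↔
    (∃ k : ℕ, k ≤ n ∧
      (∀ m : Fin n, (m : ℕ) < k →
        (∑ t, d t) + ρmax m * (∑ t, d t ^ 2) ≤ D m + ρmax m * (D m ^ 2 / Nm m)) ∧
      (∀ m : Fin n, k ≤ (m : ℕ) →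
        (∑ t, d t) + ρmin m * (∑ t, d t ^ 2) ≤ D m + ρmin m * (D m ^ 2 / Nm m)) ∧
      (∀ h : k - 1 < n, 0 < k →
        D ⟨k - 1, h⟩ ^ 2 / Nm ⟨k - 1, h⟩ ≤ (∑ t, d t ^ 2)) ∧
      (∀ h : k < n, (∑ t, d t ^ 2) ≤ D ⟨k, h⟩ ^ 2 / Nm ⟨k, h⟩)) :=
  robust_feasible_iff_some_subproblem_general n NF ρmin ρmax D Nm hρ hsorted d
end
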